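/- Fix k ≥ 1 and let q ∈ ℤ. Then ∂_0(ĉ^{-1}_{k+1}·c^1_q) = 2(f̃^1_k·c^2_q + a^1_{k+1}·c^2_{q-1}), ∂_1(ĉ^{-1}_{k+1}·c^1_q) = 2(f^0_k·c^2_q + a^0_{k+1}·c^2_{q-1}), and (∂_0 + ∂_1)(ĉ^{-1}_{k+1}·c^1_q) = 2(c^1_k·c^2_q + c^1_{k+1}·c^2_{q-1}). -/

import Mathlib

/-!
The polynomial ring `R2 = ℚ[c₁, c₂, …, t₁, t₂, …, f_k]`: the variable `Sum.inl p`
(for `p ≥ 1`) is `c_p`, `Sum.inr i` (for `i ≥ 1`) is `t_i`, and `Sum.inl 0` is the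
adjoined variable `f_k`.
-/

noncomputable section
open MvPolynomial Finset
open scoped Classical

abbrev R2 : Type := MvPolynomial (ℕ ⊕ ℕ) ℚ

/-- The variable `t_i`. -/
def Tv (i : ℕ) : R2 := X (Sum.inr i)

/-- The adjoined variable `f_k`. -/
def fk : R2 := X (Sum.inl 0)

/-- `c_p`, with the conventions `c_0 = 1` and `c_p = 0` for `p < 0`. -/
def Cv (p : ℤ) : R2 := if p < 0 then 0 else if p = 0 then 1 else X (Sum.inl p.toNat)

/-- The complete homogeneous symmetric polynomial `h_j` evaluated on a list. -/
def hfun : List R2 → ℕ → R2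
  | [], j => if j = 0 then 1 else 0
  | a :: L, j => ∑ i ∈ Finset.range (j + 1), a ^ i * hfun L (j - i)

/-- The elementary symmetric polynomial `e_j` evaluated on a list. -/
def efun : List R2 → ℕ → R2
  | [], j => if j = 0 then 1 else 0
  | _ :: _, 0 => 1
  | a :: L, j + 1 => efun L (j + 1) + a * efun L j

/-- The list `(-t_1, …, -t_r)`. -/
def negT (r : ℕ) : List R2 := (List.range r).map fun i => -Tv (i + 1)

/-- `h^r_j(-t)`: complete homogeneous for `r ≥ 0`, elementary `e^{-r}_j(-t)` for `r < 0`. -/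
def hmt (r : ℤ) (j : ℕ) : R2 :=
  if 0 ≤ r then hfun (negT r.toNat) j else efun (negT (-r).toNat) j

/-- `c^r_p := Σ_{j=0}^p c_{p-j} h^r_j(-t)`. -/
def cc (r p : ℤ) : R2 := ∑ j ∈ Finset.range (p.toNat + 1), Cv (p - j) * hmt r j

/-- `a^s_p := (1/2)c_p + Σ_{j=1}^p c_{p-j} h^s_j(-t)`. -/
def aa (s p : ℤ) : R2 :=
  C (1/2 : ℚ) * Cv p + ∑ j ∈ Finset.Icc 1 p.toNat, Cv (p - j) * hmt s j

/-- `e^s_s(-t) = (-t_1)⋯(-t_s)`. -/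
def eprod (s : ℤ) : R2 := ∏ i ∈ Finset.range s.toNat, -Tv (i + 1)

/-- `ĉ^r_p := c^r_p + (2f_k - c_k)e^{p-k}_{p-k}(-t)` when `r = k - p < 0`, else `c^r_p`. -/
def chat (k : ℕ) (r p : ℤ) : R2 :=
  if r = (k : ℤ) - p ∧ r < 0 then cc r p + (2 * fk - Cv k) * eprod (p - k) else cc r p

/-- `f̃_k := c_k - f_k`. -/
def ftil (k : ℕ) : R2 := Cv k - fk

/-- `f^s_k := f_k + Σ_{j=1}^k c_{k-j} h^s_j(-t)`. -/
def fks (k : ℕ) (s : ℤ) : R2 := fk + ∑ j ∈ Finset.Icc 1 k, Cv ((k : ℤ) - j) * hmt s j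

/-- `f̃^s_k := c_k - 2f_k + f^s_k`. -/
def ftils (k : ℕ) (s : ℤ) : R2 := Cv k - 2 * fk + fks k s

/-- Images of the variables under the automorphism `s_i` (depending on `k` via `s_0(f_k)`). -/
def sImgF (k : ℕ) : ℕ → ℕ ⊕ ℕ → R2
  | 0, Sum.inr j => if j = 1 then -Tv 2 else if j = 2 then -Tv 1 else Tv j
  | 0, Sum.inl p =>
      if p = 0 then fk - (Tv 1 + Tv 2) * cc 2 ((k : ℤ) - 1)
      else Cv p - 2 * (Tv 1 + Tv 2) *
        ∑ j ∈ Finset.range p, (-1 : R2) ^ j *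
          (∑ a ∈ Finset.range (j + 1), Tv 1 ^ a * Tv 2 ^ (j - a)) * Cv ((p : ℤ) - 1 - j)
  | i + 1, Sum.inr j =>
      if j = i + 1 then Tv (i + 2) else if j = i + 2 then Tv (i + 1) else Tv j
  | _ + 1, Sum.inl p => X (Sum.inl p)

/-- The ring automorphism `s_i` of `R2`. -/
def sA (k i : ℕ) : R2 →ₐ[ℚ] R2 := aeval (sImgF k i)

/-- The fraction field of `R2`. -/
abbrev KK : Type := FractionRing R2

/-- The canonical embedding of `R2` into its fraction field. -/
def toK : R2 →+* KK := algebraMap R2 KK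

/-- The denominator `t_1 + t_2` (for `i = 0`) resp. `t_{i+1} - t_i` (for `i ≥ 1`). -/
def dden (i : ℕ) : R2 := if i = 0 then Tv 1 + Tv 2 else Tv (i + 1) - Tv i

/-- The divided difference operator `∂_i`, with values in the fraction field. -/
def dd (k i : ℕ) (f : R2) : KK := (toK f - toK (sA k i f)) / toK (dden i)

/-!
Everything is expressed through `c^2`. The recursion `h^r_{j+1} = h^{r-1}_{j+1} - t_r h^r_j`
gives `c^r_p = c^{r-1}_p - t_r c^r_{p-1}`; hence `c^1_q = c^2_q + t_2 c^2_{q-1}` and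
`ĉ^{-1}_{k+1} = c_{k+1} - 2 t_1 f_k`. Since `c^2` is symmetric in `t_1, t_2`, `s_1` fixes it,
while `s_0 c_p = c_p - 2(t_1 + t_2) c^2_{p-1}` and therefore `s_0 c^1_q = c^2_q - t_1 c^2_{q-1}`.
The numerators of both divided differences then become explicit multiples of `t_1 + t_2` and
`t_2 - t_1`.
-/

lemma hfun_zero (L : List R2) : hfun L 0 = 1 := by
  induction L with
  | nil => rfl
  | cons a L ih => simp [hfun, ih]

lemma hfun_cons_succ (a : R2) (L : List R2) (j : ℕ) :
    hfun (a :: L) (j + 1) = hfun L (j + 1) + a * hfun (a :: L) j := by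
  rw [hfun, hfun, sum_range_succ', mul_sum, add_comm]
  congr 1
  · simp
  · refine sum_congr rfl fun i hi => ?_
    rw [show j + 1 - (i + 1) = j - i by omega, pow_succ]
    ring

lemma hfun_singleton (a : R2) (j : ℕ) : hfun [a] j = a ^ j := by
  induction j with
  | zero => exact hfun_zero _
  | succ j ih => rw [hfun_cons_succ, ih, pow_succ]; simp [hfun, mul_comm]

lemma hfun_pair (a b : R2) (j : ℕ) :
    hfun [a, b] j = ∑ i ∈ range (j + 1), a ^ i * b ^ (j - i) := by
  rw [hfun]
  simp only [hfun_singleton]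

lemma hfun_pair_comm (a b : R2) (j : ℕ) : hfun [a, b] j = hfun [b, a] j := by
  simpa [hfun_pair] using geom_sum₂_comm a b (j + 1)

lemma map_hfun {F : Type*} [FunLike F R2 R2] [RingHomClass F R2 R2] (φ : F) (L : List R2)
    (j : ℕ) : φ (hfun L j) = hfun (L.map φ) j := by
  induction L generalizing j with
  | nil => simp only [List.map_nil, hfun]; split_ifs <;> simp
  | cons a L ih => simp [hfun, ih]

lemma hmt_zero_right (r : ℤ) : hmt r 0 = 1 := by
  unfold hmt
  split
  · exact hfun_zero _
  · cases negT (-r).toNat <;> rfl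

lemma hmt_zero_left : hmt 0 = hfun [] := by
  funext j; simp [hmt, negT]

lemma hmt_neg_one : hmt (-1) = efun [-Tv 1] := by
  funext j; simp [hmt, negT]

lemma hmt_one : hmt 1 = hfun [-Tv 1] := by
  funext j; simp [hmt, negT]

lemma hmt_two : hmt 2 = hfun [-Tv 1, -Tv 2] := by
  funext j; simp [hmt, negT, List.range_succ]

lemma Cv_of_neg {p : ℤ} (hp : p < 0) : Cv p = 0 := if_pos hp

lemma Cv_zero : Cv 0 = 1 := rfl

lemma cc_of_neg (r : ℤ) {p : ℤ} (hp : p < 0) : cc r p = 0 := by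
  simp [cc, show p.toNat = 0 by omega, Cv_of_neg hp]

lemma cc_zero_right (r : ℤ) : cc r 0 = 1 := by
  simp [cc, Cv_zero, hmt_zero_right]

lemma cc_zero_left (p : ℤ) : cc 0 p = Cv p := by
  rw [cc, sum_eq_single 0 (fun j _ hj => by simp [hmt_zero_left, hfun, hj]) (by simp)]
  simp [hmt_zero_right]

lemma cc_natCast_eq_add_sum_Icc (r : ℤ) (n : ℕ) :
    cc r n = Cv n + ∑ j ∈ Icc 1 n, Cv (n - j) * hmt r j := by
  rw [cc, Int.toNat_natCast, range_eq_Ico, Ico_add_one_right_eq_Icc,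
    ← insert_Icc_add_one_left_eq_Icc (Nat.zero_le n), sum_insert (by simp)]
  simp [hmt_zero_right]

lemma cc_eq_add_mul_cc {r r' r'' : ℤ} {a : R2}
    (h : ∀ j, hmt r (j + 1) = hmt r' (j + 1) + a * hmt r'' j) (p : ℤ) :
    cc r p = cc r' p + a * cc r'' (p - 1) := by
  rcases lt_trichotomy p 0 with hp | rfl | hp
  · simp [cc_of_neg _ hp, cc_of_neg _ (show p - 1 < 0 by omega)]
  · simp [cc_zero_right, cc_of_neg _ (show (-1 : ℤ) < 0 by omega)]
  · obtain ⟨n, rfl⟩ : ∃ n : ℕ, p = n + 1 := ⟨(p - 1).toNat, by omega⟩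
    have hn : ((n : ℤ) + 1).toNat = n + 1 := by omega
    simp only [cc, hn, add_sub_cancel_right, Int.toNat_natCast, sum_range_succ' _ (n + 1), h,
      mul_add, sum_add_distrib, mul_sum, hmt_zero_right, Nat.cast_add, Nat.cast_one,
      add_sub_add_right_eq_sub, mul_left_comm a]
    ring

lemma cc_one_eq (p : ℤ) : cc 1 p = Cv p - Tv 1 * cc 1 (p - 1) := by
  have := cc_eq_add_mul_cc (r' := 0) (a := -Tv 1) (fun j => by
    rw [hmt_one, hmt_zero_left, hfun_cons_succ]) p
  rw [this, cc_zero_left]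
  ring

lemma cc_neg_one_eq (p : ℤ) : cc (-1) p = Cv p - Tv 1 * Cv (p - 1) := by
  have := cc_eq_add_mul_cc (r' := 0) (r'' := 0) (a := -Tv 1) (fun j => by
    rw [hmt_neg_one, hmt_zero_left]; rfl) p
  rw [this, cc_zero_left, cc_zero_left]
  ring

lemma cc_one_eq_cc_two (p : ℤ) : cc 1 p = cc 2 p + Tv 2 * cc 2 (p - 1) := by
  have := cc_eq_add_mul_cc (r := 2) (r' := 1) (a := -Tv 2) (fun j => by
    rw [hmt_two, hmt_one, hfun_pair_comm, hfun_cons_succ, hfun_pair_comm]) p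
  rw [this]
  ring

lemma sA_zero_Tv_one (k : ℕ) : sA k 0 (Tv 1) = -Tv 2 := by
  simp [sA, Tv, sImgF]

lemma sA_zero_fk (k : ℕ) : sA k 0 fk = fk - (Tv 1 + Tv 2) * cc 2 (k - 1) := by
  simp [sA, fk, sImgF]

lemma sA_one_Tv_one (k : ℕ) : sA k 1 (Tv 1) = Tv 2 := by
  simp [sA, Tv, sImgF]

lemma sA_one_Tv_two (k : ℕ) : sA k 1 (Tv 2) = Tv 1 := by
  simp [sA, Tv, sImgF]

lemma sA_one_fk (k : ℕ) : sA k 1 fk = fk := by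
  simp [sA, fk, sImgF]

lemma sA_one_Cv (k : ℕ) (p : ℤ) : sA k 1 (Cv p) = Cv p := by
  unfold Cv
  split_ifs <;> simp [sA, sImgF]

lemma sA_one_cc_two (k : ℕ) (p : ℤ) : sA k 1 (cc 2 p) = cc 2 p := by
  simp only [cc, map_sum, map_mul, sA_one_Cv, hmt_two, map_hfun, List.map_cons, List.map_nil,
    map_neg, sA_one_Tv_one, sA_one_Tv_two, hfun_pair_comm (-Tv 2)]

lemma sA_one_cc_one (k : ℕ) (p : ℤ) : sA k 1 (cc 1 p) = cc 2 p + Tv 1 * cc 2 (p - 1) := by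
  rw [cc_one_eq_cc_two, map_add, map_mul, sA_one_Tv_two, sA_one_cc_two, sA_one_cc_two]

lemma hmt_two_eq_neg_one_pow_mul (j : ℕ) :
    hmt 2 j = (-1) ^ j * ∑ a ∈ range (j + 1), Tv 1 ^ a * Tv 2 ^ (j - a) := by
  rw [hmt_two, hfun_pair, mul_sum]
  refine sum_congr rfl fun a ha => ?_
  have hpow : (-1 : R2) ^ j = (-1) ^ a * (-1) ^ (j - a) := by
    rw [← pow_add, Nat.add_sub_cancel' (by simpa [Nat.lt_succ_iff] using ha)]
  rw [neg_pow, neg_pow (Tv 2), hpow]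
  ring

lemma sA_zero_Cv (k : ℕ) (p : ℤ) : sA k 0 (Cv p) = Cv p - 2 * (Tv 1 + Tv 2) * cc 2 (p - 1) := by
  rcases le_or_gt p 0 with hp | hp
  · rw [cc_of_neg _ (by omega), mul_zero, sub_zero]
    unfold Cv
    split_ifs <;> first | simp | omega
  · obtain ⟨m, rfl⟩ : ∃ m : ℕ, p = m + 1 := ⟨(p - 1).toNat, by omega⟩
    have hCv : Cv (m + 1) = X (Sum.inl (m + 1)) := by
      rw [Cv, if_neg (by omega), if_neg (by omega)]; rfl
    rw [hCv, sA, aeval_X, sImgF, if_neg (by omega), add_sub_cancel_right, cc, Int.toNat_natCast]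
    congr 2
    refine sum_congr rfl fun j _ => ?_
    rw [hmt_two_eq_neg_one_pow_mul, Nat.cast_succ, add_sub_cancel_right]
    ring

lemma sA_zero_cc_one (k : ℕ) (p : ℤ) : sA k 0 (cc 1 p) = cc 2 p - Tv 1 * cc 2 (p - 1) := by
  induction p using Int.inductionOn' (b := -1) with
  | zero => simp [cc_of_neg]
  | succ p _ ih =>
    have h1 := cc_one_eq_cc_two (p + 1)
    have h2 := cc_one_eq (p + 1)
    rw [h2, map_sub, map_mul, sA_zero_Cv, sA_zero_Tv_one]
    simp only [add_sub_cancel_right] at h1 h2 ⊢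
    rw [ih]
    linear_combination h1 - h2 + Tv 1 * cc_one_eq_cc_two p
  | pred p hp _ =>
    simp [cc_of_neg _ (show p - 1 < 0 by omega), cc_of_neg _ (show p - 1 - 1 < 0 by omega)]

lemma chat_neg_one_succ (k : ℕ) : chat k (-1) (k + 1) = Cv (k + 1) - 2 * Tv 1 * fk := by
  rw [chat, if_pos ⟨by ring, by norm_num⟩, cc_neg_one_eq, add_sub_cancel_right,
    add_sub_cancel_left, eprod, Int.toNat_one, range_one, prod_singleton]
  ring

lemma fks_eq (k : ℕ) (s : ℤ) : fks k s = fk + cc s k - Cv k := by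
  rw [fks, cc_natCast_eq_add_sum_Icc]
  ring

lemma ftils_eq (k : ℕ) (s : ℤ) : ftils k s = cc s k - fk := by
  rw [ftils, fks_eq]
  ring

lemma two_mul_aa (s p : ℤ) : 2 * aa s p = 2 * cc s p - Cv p := by
  have h2 : (2 : R2) * C (1 / 2) = 1 := by
    rw [← map_ofNat C 2, ← C_mul]
    norm_num
  rcases lt_or_ge p 0 with hp | hp
  · simp [aa, cc_of_neg _ hp, Cv_of_neg hp, show p.toNat = 0 by omega]
  · obtain ⟨n, rfl⟩ : ∃ n : ℕ, p = n := ⟨p.toNat, by omega⟩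
    rw [aa, cc_natCast_eq_add_sum_Icc, Int.toNat_natCast]
    linear_combination Cv n * h2

lemma fks_zero_right (k : ℕ) : fks k 0 = fk := by
  rw [fks_eq, cc_zero_left]
  ring

lemma two_mul_aa_zero_left (p : ℤ) : 2 * aa 0 p = Cv p := by
  rw [two_mul_aa, cc_zero_left]
  ring

lemma dden_ne_zero (i : ℕ) : dden i ≠ 0 := by
  intro h
  apply_fun eval fun v => if v = Sum.inr (i + 1) then (1 : ℚ) else 0 at h
  rcases i with _ | i <;> simp [dden, Tv] at h

lemma dd_eq_of_sub_eq_mul {k i : ℕ} {f g : R2} (h : f - sA k i f = g * dden i) :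
    dd k i f = toK g := by
  have hinj : Function.Injective toK := IsFractionRing.injective R2 KK
  rw [dd, div_eq_iff ((map_ne_zero_iff toK hinj).mpr (dden_ne_zero i)), ← map_sub, ← map_mul, h]

lemma chat_mul_cc_one_sub_sA_zero (k : ℕ) (q : ℤ) :
    chat k (-1) (k + 1) * cc 1 q - sA k 0 (chat k (-1) (k + 1) * cc 1 q) =
      2 * (ftils k 1 * cc 2 q + aa 1 (k + 1) * cc 2 (q - 1)) * dden 0 := by
  have hcc := cc_one_eq ((k : ℤ) + 1)
  rw [add_sub_cancel_right] at hcc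
  rw [chat_neg_one_succ, ftils_eq, dden, if_pos rfl]
  simp only [map_mul, map_sub, map_ofNat, sA_zero_Cv, sA_zero_Tv_one, sA_zero_fk, sA_zero_cc_one,
    add_sub_cancel_right]
  rw [cc_one_eq_cc_two q]
  linear_combination (-(Tv 1 + Tv 2) * cc 2 (q - 1)) * two_mul_aa 1 (k + 1)
    + (-2 * (Tv 1 + Tv 2) * cc 2 (q - 1)) * hcc
    + (-2 * (Tv 1 + Tv 2) * (cc 2 q - Tv 1 * cc 2 (q - 1))) * cc_one_eq_cc_two k

lemma chat_mul_cc_one_sub_sA_one (k : ℕ) (q : ℤ) :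
    chat k (-1) (k + 1) * cc 1 q - sA k 1 (chat k (-1) (k + 1) * cc 1 q) =
      2 * (fks k 0 * cc 2 q + aa 0 (k + 1) * cc 2 (q - 1)) * dden 1 := by
  rw [chat_neg_one_succ, fks_zero_right, dden, if_neg one_ne_zero]
  simp only [map_mul, map_sub, map_ofNat, sA_one_Cv, sA_one_Tv_one, sA_one_fk, sA_one_cc_one]
  rw [cc_one_eq_cc_two q]
  linear_combination (-(Tv 2 - Tv 1) * cc 2 (q - 1)) * two_mul_aa_zero_left (k + 1)

theorem statement11_general (k : ℕ) (q : ℤ) :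
    dd k 0 (chat k (-1) ((k : ℤ) + 1) * cc 1 q) =
      toK (2 * (ftils k 1 * cc 2 q + aa 1 ((k : ℤ) + 1) * cc 2 (q - 1))) ∧
    dd k 1 (chat k (-1) ((k : ℤ) + 1) * cc 1 q) =
      toK (2 * (fks k 0 * cc 2 q + aa 0 ((k : ℤ) + 1) * cc 2 (q - 1))) ∧
    dd k 0 (chat k (-1) ((k : ℤ) + 1) * cc 1 q) +
        dd k 1 (chat k (-1) ((k : ℤ) + 1) * cc 1 q) =
      toK (2 * (cc 1 k * cc 2 q + cc 1 ((k : ℤ) + 1) * cc 2 (q - 1))) := by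
  have h0 := dd_eq_of_sub_eq_mul (chat_mul_cc_one_sub_sA_zero k q)
  have h1 := dd_eq_of_sub_eq_mul (chat_mul_cc_one_sub_sA_one k q)
  refine ⟨h0, h1, ?_⟩
  rw [h0, h1, ← map_add, ftils_eq, fks_zero_right]
  congr 1
  linear_combination cc 2 (q - 1) * (two_mul_aa 1 (k + 1) + two_mul_aa_zero_left (k + 1))

theorem statement11 (k : ℕ) (hk : 1 ≤ k) (q : ℤ) :
    dd k 0 (chat k (-1) ((k : ℤ) + 1) * cc 1 q) =
      toK (2 * (ftils k 1 * cc 2 q + aa 1 ((k : ℤ) + 1) * cc 2 (q - 1))) ∧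
    dd k 1 (chat k (-1) ((k : ℤ) + 1) * cc 1 q) =
      toK (2 * (fks k 0 * cc 2 q + aa 0 ((k : ℤ) + 1) * cc 2 (q - 1))) ∧
    dd k 0 (chat k (-1) ((k : ℤ) + 1) * cc 1 q) +
        dd k 1 (chat k (-1) ((k : ℤ) + 1) * cc 1 q) =
      toK (2 * (cc 1 k * cc 2 q + cc 1 ((k : ℤ) + 1) * cc 2 (q - 1))) :=
  statement11_general k q
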